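/- Let P = (x_i) be a sequence in [0,1), f an IET with n intervals, and P* = (f(x_i)). If P is a low-discrepancy sequence (D*_N(P) = O(N^{-1} log N)), then P* is also a low-discrepancy sequence. -/

import Mathlib

/-! For `a ∈ [0, 1]`, the points of `[0, 1)` that an IET with breakpoints `Λ` and translations `c`
sends below `a` form the disjoint union of the `n` intervals `[Λ j, m j)` with
`m j = max (Λ j) (min (Λ (j+1)) (a - c j))`. Their lengths add up to `a`, because `f` moves them
onto intervals of the same lengths that tile `[0, a)`. The local discrepancy of `P` on each
`[Λ j, m j)` is a difference of two local discrepancies of anchored intervals, hence at most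
`2 D*_N(P)`, so `D*_N(P*) ≤ 2 n D*_N(P)` and the bound `O(log N / N)` transfers to `P*`. -/

open Set Finset

/-- Star-discrepancy of the first `N` points of a sequence in `[0,1)`. -/
noncomputable def starDisc (N : ℕ) (x : ℕ → ℝ) : ℝ :=
  sSup {d : ℝ | ∃ a ∈ Set.Icc (0:ℝ) 1,
    d = |(((Finset.range N).filter (fun i => x i < a)).card : ℝ) / N - a|}

/-- Star-discrepancy of a finite point set in `[0,1)`. -/
noncomputable def starDiscP (N : ℕ) (x : Fin N → ℝ) : ℝ :=
  sSup {d : ℝ | ∃ a ∈ Set.Icc (0:ℝ) 1,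
    d = |((Finset.univ.filter (fun i => x i < a)).card : ℝ) / N - a|}

/-- A sequence in `[0,1)` is a low-discrepancy sequence if `D_N^* = O(log N / N)`. -/
def LowDisc (x : ℕ → ℝ) : Prop :=
  ∃ C : ℝ, 0 < C ∧ ∀ N : ℕ, 2 ≤ N → starDisc N x ≤ C * Real.log N / N

/-- `f` is an interval exchange transformation of `[0,1)` with `n` intervals:
a bijection of `[0,1)` which is a translation on each of `n` consecutive subintervals. -/
def IsIET (n : ℕ) (f : ℝ → ℝ) : Prop :=
  Set.BijOn f (Set.Ico 0 1) (Set.Ico 0 1) ∧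
  ∃ Λ : Fin (n+1) → ℝ, Λ 0 = 0 ∧ Λ (Fin.last n) = 1 ∧ StrictMono Λ ∧
    ∀ i : Fin n, ∃ c : ℝ, ∀ x ∈ Set.Ico (Λ i.castSucc) (Λ i.succ), f x = x + c

open scoped Function

noncomputable def localDisc (N : ℕ) (x : ℕ → ℝ) (a : ℝ) : ℝ :=
  (#{i ∈ range N | x i < a} : ℝ) / N - a

section Discrepancy

variable {N : ℕ} {x : ℕ → ℝ} {a u v : ℝ}

lemma abs_localDisc_le_one (ha : a ∈ Set.Icc 0 1) : |localDisc N x a| ≤ 1 := by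
  have h0 : 0 ≤ (#{i ∈ range N | x i < a} : ℝ) / N := by positivity
  have h1 : (#{i ∈ range N | x i < a} : ℝ) / N ≤ 1 :=
    div_le_one_of_le₀ (by exact_mod_cast (card_filter_le _ _).trans (card_range N).le)
      N.cast_nonneg
  rw [localDisc, abs_sub_le_iff]
  constructor <;> linarith [ha.1, ha.2]

lemma bddAbove_abs_localDisc (N : ℕ) (x : ℕ → ℝ) :
    BddAbove {d : ℝ | ∃ a ∈ Set.Icc (0 : ℝ) 1, d = |localDisc N x a|} :=
  ⟨1, by rintro _ ⟨a, ha, rfl⟩; exact abs_localDisc_le_one ha⟩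

lemma abs_localDisc_le_starDisc (ha : a ∈ Set.Icc 0 1) : |localDisc N x a| ≤ starDisc N x :=
  le_csSup (bddAbove_abs_localDisc N x) ⟨a, ha, rfl⟩

lemma starDisc_le {B : ℝ} (hB : ∀ a ∈ Set.Icc (0 : ℝ) 1, |localDisc N x a| ≤ B) :
    starDisc N x ≤ B :=
  csSup_le ⟨_, 0, ⟨le_rfl, zero_le_one⟩, rfl⟩ (by rintro _ ⟨a, ha, rfl⟩; exact hB a ha)

lemma card_mem_Ico_div_sub_eq_localDisc_sub (huv : u ≤ v) :
    (#{i ∈ range N | x i ∈ Ico u v} : ℝ) / N - (v - u) = localDisc N x v - localDisc N x u := by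
  have hsub : {i ∈ range N | x i < u} ⊆ {i ∈ range N | x i < v} := fun i hi => by
    rw [Finset.mem_filter] at hi ⊢
    exact ⟨hi.1, hi.2.trans_le huv⟩
  have hdiff : {i ∈ range N | x i ∈ Ico u v}
      = {i ∈ range N | x i < v} \ {i ∈ range N | x i < u} := by
    ext i
    simp only [Finset.mem_filter, Finset.mem_sdiff, Set.mem_Ico, not_and, not_lt]
    tauto
  rw [hdiff, card_sdiff_of_subset hsub, Nat.cast_sub (Finset.card_le_card hsub), localDisc,
    localDisc]
  ring

lemma abs_card_mem_Ico_div_sub_le (hu : 0 ≤ u) (huv : u ≤ v) (hv : v ≤ 1) :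
    |(#{i ∈ range N | x i ∈ Ico u v} : ℝ) / N - (v - u)| ≤ 2 * starDisc N x := by
  rw [card_mem_Ico_div_sub_eq_localDisc_sub huv, two_mul]
  exact (abs_sub _ _).trans (add_le_add (abs_localDisc_le_starDisc ⟨hu.trans huv, hv⟩)
    (abs_localDisc_le_starDisc ⟨hu, huv.trans hv⟩))

open Classical in
lemma abs_card_mem_iUnion_Ico_div_sub_le {ι : Type*} [Fintype ι] {u v : ι → ℝ}
    (hu : ∀ j, 0 ≤ u j) (huv : ∀ j, u j ≤ v j) (hv : ∀ j, v j ≤ 1)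
    (hdisj : Pairwise (Disjoint on fun j => Ico (u j) (v j))) :
    |(#{i ∈ range N | x i ∈ ⋃ j, Ico (u j) (v j)} : ℝ) / N - ∑ j, (v j - u j)|
      ≤ 2 * Fintype.card ι * starDisc N x := by
  have hunion : {i ∈ range N | x i ∈ ⋃ j, Ico (u j) (v j)}
      = univ.biUnion fun j => {i ∈ range N | x i ∈ Ico (u j) (v j)} := by
    ext i
    simp only [Finset.mem_filter, Set.mem_iUnion, Finset.mem_biUnion, Finset.mem_univ, true_and]
    tauto
  have hcard : (#{i ∈ range N | x i ∈ ⋃ j, Ico (u j) (v j)} : ℝ)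
      = ∑ j, (#{i ∈ range N | x i ∈ Ico (u j) (v j)} : ℝ) := by
    rw [hunion, card_biUnion, Nat.cast_sum]
    intro j _ k _ hjk
    exact disjoint_filter.2 fun i _ hj hk => Set.disjoint_left.1 (hdisj hjk) hj hk
  calc |(#{i ∈ range N | x i ∈ ⋃ j, Ico (u j) (v j)} : ℝ) / N - ∑ j, (v j - u j)|
      = |∑ j, ((#{i ∈ range N | x i ∈ Ico (u j) (v j)} : ℝ) / N - (v j - u j))| := by
        rw [hcard, sum_div, ← sum_sub_distrib]
    _ ≤ ∑ j, |(#{i ∈ range N | x i ∈ Ico (u j) (v j)} : ℝ) / N - (v j - u j)| :=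
        abs_sum_le_sum_abs _ _
    _ ≤ ∑ _j : ι, 2 * starDisc N x :=
        sum_le_sum fun j _ => abs_card_mem_Ico_div_sub_le (hu j) (huv j) (hv j)
    _ = 2 * Fintype.card ι * starDisc N x := by
        rw [sum_const, card_univ, nsmul_eq_mul]
        ring

end Discrepancy

lemma Fin.exists_castSucc_le_and_lt_succ {α : Type*} [LinearOrder α] {n : ℕ}
    (Λ : Fin (n + 1) → α) {y : α} (h0 : Λ 0 ≤ y) (hlast : y < Λ (Fin.last n)) :
    ∃ j : Fin n, Λ j.castSucc ≤ y ∧ y < Λ j.succ := by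
  classical
  let s : Finset (Fin (n + 1)) := {k | Λ k ≤ y}
  have hs : s.Nonempty := ⟨0, Finset.mem_filter.2 ⟨Finset.mem_univ _, h0⟩⟩
  have hk : Λ (s.max' hs) ≤ y := (Finset.mem_filter.1 (s.max'_mem hs)).2
  obtain ⟨j, hj⟩ := Fin.eq_castSucc_of_ne_last (x := s.max' hs) fun h => by
    rw [h] at hk
    exact hk.not_gt hlast
  refine ⟨j, hj ▸ hk, lt_of_not_ge fun hle => ?_⟩
  have hsucc : j.succ ≤ s.max' hs := s.le_max' _ (Finset.mem_filter.2 ⟨Finset.mem_univ _, hle⟩)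
  exact (hj ▸ hsucc).not_gt Fin.castSucc_lt_succ

lemma pairwise_disjoint_Ico_castSucc_succ {β : Type*} [Preorder β] {n : ℕ}
    {Λ : Fin (n + 1) → β} (hΛ : Monotone Λ) :
    Pairwise (Disjoint on fun j : Fin n => Ico (Λ j.castSucc) (Λ j.succ)) := by
  intro j k hjk
  wlog h : j < k generalizing j k
  · exact (this hjk.symm (hjk.lt_or_gt.resolve_left h)).symm
  exact Set.Ico_disjoint_Ico_same.mono_right
    (Set.Ico_subset_Ico_left (hΛ (Fin.succ_le_castSucc_iff.2 h)))

lemma sum_sub_eq_of_iUnion_Ico_eq {ι : Type*} [Fintype ι] {u v : ι → ℝ} {s t : ℝ}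
    (huv : ∀ j, u j ≤ v j) (hdisj : Pairwise (Disjoint on fun j => Ico (u j) (v j)))
    (hunion : ⋃ j, Ico (u j) (v j) = Ico s t) (hst : s ≤ t) :
    ∑ j, (v j - u j) = t - s := by
  have hvol := MeasureTheory.measure_iUnion (μ := MeasureTheory.volume) hdisj
    fun _ => measurableSet_Ico
  simp only [hunion, Real.volume_Ico, tsum_fintype] at hvol
  rw [← ENNReal.ofReal_sum_of_nonneg fun j _ => sub_nonneg.2 (huv j)] at hvol
  exact ((ENNReal.ofReal_eq_ofReal_iff (sub_nonneg.2 hst)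
    (Finset.sum_nonneg fun j _ => sub_nonneg.2 (huv j))).1 hvol).symm

section IET

variable {n : ℕ} {Λ : Fin (n + 1) → ℝ} {c : Fin n → ℝ} {f : ℝ → ℝ} {a y : ℝ} {j : Fin n}

/-- The points of the `j`-th piece that the translation by `c j` sends below `a` form
`Ico (Λ j.castSucc) (cutPoint Λ c a j)`. -/
noncomputable def cutPoint (Λ : Fin (n + 1) → ℝ) (c : Fin n → ℝ) (a : ℝ) (j : Fin n) : ℝ :=
  max (Λ j.castSucc) (min (Λ j.succ) (a - c j))

lemma castSucc_le_cutPoint : Λ j.castSucc ≤ cutPoint Λ c a j :=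
  le_max_left _ _

lemma cutPoint_le_succ (hΛ : Monotone Λ) : cutPoint Λ c a j ≤ Λ j.succ :=
  max_le (hΛ (Fin.castSucc_le_succ j)) (min_le_left _ _)

lemma lt_iff_lt_cutPoint (hfj : ∀ y ∈ Ico (Λ j.castSucc) (Λ j.succ), f y = y + c j)
    (hy : y ∈ Ico (Λ j.castSucc) (Λ j.succ)) : f y < a ↔ y < cutPoint Λ c a j := by
  rw [hfj y hy, ← lt_sub_iff_add_lt, cutPoint, lt_max_iff, lt_min_iff]
  simp [hy.1.not_gt, hy.2]

lemma pairwise_disjoint_Ico_cutPoint (hΛ : Monotone Λ) :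
    Pairwise (Disjoint on fun j => Ico (Λ j.castSucc) (cutPoint Λ c a j)) :=
  (pairwise_disjoint_Ico_castSucc_succ hΛ).mono fun _ _ h =>
    h.mono (Set.Ico_subset_Ico_right (cutPoint_le_succ hΛ))
      (Set.Ico_subset_Ico_right (cutPoint_le_succ hΛ))

lemma mem_iUnion_Ico_cutPoint_iff (h0 : Λ 0 = 0) (h1 : Λ (Fin.last n) = 1) (hΛ : Monotone Λ)
    (hc : ∀ j, ∀ y ∈ Ico (Λ j.castSucc) (Λ j.succ), f y = y + c j) (hy : y ∈ Ico (0 : ℝ) 1) :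
    y ∈ ⋃ j, Ico (Λ j.castSucc) (cutPoint Λ c a j) ↔ f y < a := by
  rw [Set.mem_iUnion]
  constructor
  · rintro ⟨j, hj⟩
    exact (lt_iff_lt_cutPoint (hc j) ⟨hj.1, hj.2.trans_le (cutPoint_le_succ hΛ)⟩).2 hj.2
  · intro hfy
    obtain ⟨j, hj⟩ := Fin.exists_castSucc_le_and_lt_succ Λ (h0 ▸ hy.1) (h1 ▸ hy.2)
    exact ⟨j, hj.1, (lt_iff_lt_cutPoint (hc j) hj).1 hfy⟩

lemma Ico_cutPoint_subset_Ico (h0 : Λ 0 = 0) (h1 : Λ (Fin.last n) = 1) (hΛ : Monotone Λ) :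
    Ico (Λ j.castSucc) (cutPoint Λ c a j) ⊆ Ico 0 1 :=
  Set.Ico_subset_Ico (h0 ▸ hΛ (Fin.zero_le _))
    ((cutPoint_le_succ hΛ).trans (h1 ▸ hΛ (Fin.le_last _)))

lemma sum_cutPoint_sub_eq (hbij : BijOn f (Ico 0 1) (Ico 0 1)) (h0 : Λ 0 = 0)
    (h1 : Λ (Fin.last n) = 1) (hΛ : Monotone Λ)
    (hc : ∀ j, ∀ y ∈ Ico (Λ j.castSucc) (Λ j.succ), f y = y + c j) (ha : a ∈ Icc (0 : ℝ) 1) :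
    ∑ j, (cutPoint Λ c a j - Λ j.castSucc) = a := by
  have himage : ∀ j, f '' Ico (Λ j.castSucc) (cutPoint Λ c a j)
      = Ico (Λ j.castSucc + c j) (cutPoint Λ c a j + c j) := fun j => by
    rw [Set.image_congr fun y hy => hc j y ⟨hy.1, hy.2.trans_le (cutPoint_le_succ hΛ)⟩,
      Set.image_add_const_Ico]
  have hpreimage :
      ⋃ j, Ico (Λ j.castSucc) (cutPoint Λ c a j) = Set.Ico 0 1 ∩ f ⁻¹' Set.Iio a := by
    ext y
    refine ⟨fun hy => ?_, fun hy => (mem_iUnion_Ico_cutPoint_iff h0 h1 hΛ hc hy.1).2 hy.2⟩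
    obtain ⟨j, hj⟩ := Set.mem_iUnion.1 hy
    have hy01 := Ico_cutPoint_subset_Ico h0 h1 hΛ hj
    exact ⟨hy01, (mem_iUnion_Ico_cutPoint_iff h0 h1 hΛ hc hy01).1 hy⟩
  have hunion : ⋃ j, Ico (Λ j.castSucc + c j) (cutPoint Λ c a j + c j) = Ico 0 a := by
    simp_rw [← himage, ← Set.image_iUnion, hpreimage, Set.image_inter_preimage, hbij.image_eq,
      Set.Ico_inter_Iio, min_eq_right ha.2]
  have hdisj :
      Pairwise (Disjoint on fun j => Ico (Λ j.castSucc + c j) (cutPoint Λ c a j + c j)) :=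
    fun j k hjk => by
      simp only [Function.onFun, ← himage]
      exact (pairwise_disjoint_Ico_cutPoint hΛ hjk).image hbij.injOn
        (Ico_cutPoint_subset_Ico h0 h1 hΛ) (Ico_cutPoint_subset_Ico h0 h1 hΛ)
  simpa only [add_sub_add_right_eq_sub, sub_zero] using
    sum_sub_eq_of_iUnion_Ico_eq (fun _ => (add_le_add_iff_right _).2 castSucc_le_cutPoint) hdisj
      hunion ha.1

end IET

lemma IsIET.pos {n : ℕ} {f : ℝ → ℝ} (hf : IsIET n f) : 0 < n := by
  obtain ⟨-, Λ, h0, h1, -⟩ := hf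
  rcases n with _ | n
  · exact absurd (h0.symm.trans h1) zero_ne_one
  · exact n.succ_pos

theorem IsIET.starDisc_comp_le {n : ℕ} {f : ℝ → ℝ} (hf : IsIET n f) {x : ℕ → ℝ}
    (hx : ∀ i, x i ∈ Ico (0 : ℝ) 1) (N : ℕ) :
    starDisc N (fun i => f (x i)) ≤ 2 * n * starDisc N x := by
  classical
  obtain ⟨hbij, Λ, h0, h1, hΛ, hc⟩ := hf
  choose c hc using hc
  refine starDisc_le fun a ha => ?_
  have hcount : {i ∈ range N | f (x i) < a}
      = {i ∈ range N | x i ∈ ⋃ j, Ico (Λ j.castSucc) (cutPoint Λ c a j)} :=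
    Finset.filter_congr fun i _ => (mem_iUnion_Ico_cutPoint_iff h0 h1 hΛ.monotone hc (hx i)).symm
  calc |localDisc N (fun i => f (x i)) a|
      = |(#{i ∈ range N | x i ∈ ⋃ j, Ico (Λ j.castSucc) (cutPoint Λ c a j)} : ℝ) / N
          - ∑ j, (cutPoint Λ c a j - Λ j.castSucc)| := by
        rw [localDisc, hcount, sum_cutPoint_sub_eq hbij h0 h1 hΛ.monotone hc ha]
    _ ≤ 2 * Fintype.card (Fin n) * starDisc N x :=
        abs_card_mem_iUnion_Ico_div_sub_le
          (fun _ => h0 ▸ hΛ.monotone (Fin.zero_le _)) (fun _ => castSucc_le_cutPoint)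
          (fun _ => (cutPoint_le_succ hΛ.monotone).trans (h1 ▸ hΛ.monotone (Fin.le_last _)))
          (pairwise_disjoint_Ico_cutPoint hΛ.monotone)
    _ = 2 * n * starDisc N x := by rw [Fintype.card_fin]

/-- If `P` is a low-discrepancy sequence in `[0,1)` and `f` is an IET with
`n` intervals, then `P* = (f(x_i))` is also a low-discrepancy sequence. -/
theorem lowDisc_of_iet_image (n : ℕ) (f : ℝ → ℝ) (hf : IsIET n f)
    (x : ℕ → ℝ) (hx : ∀ i, x i ∈ Set.Ico (0:ℝ) 1)
    (hP : LowDisc x) : LowDisc (fun i => f (x i)) := by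
  obtain ⟨C, hC, hbound⟩ := hP
  have hn := hf.pos
  refine ⟨2 * n * C, by positivity, fun N hN => ?_⟩
  calc starDisc N (fun i => f (x i)) ≤ 2 * n * starDisc N x := hf.starDisc_comp_le hx N
    _ ≤ 2 * n * (C * Real.log N / N) := by gcongr; exact hbound N hN
    _ = 2 * n * C * Real.log N / N := by ring
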